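/- Let A, B > 0 and suppose u : (0, R) → ℝ is differentiable with u'(r) ≤ -u(r)²/A - B and lim sup_{r→0+} r·u(r) ≤ A. Then u(r) ≤ √(AB)·cot(√(B/A)·r) for all 0 < r < min(R, π√(A/B)); in particular u cannot be defined (finite) past r = π√(A/B), so R ≤ π√(A/B). -/

import Mathlib

/-!
Write `u = √(AB) · cot θ` with the phase `θ = arccot (u / √(AB)) ∈ (0, π)`. The Riccati
inequality `u' ≤ -u²/A - B` becomes `θ' ≥ √(B/A)`, so `θ r ≥ θ 0⁺ + √(B/A) r ≥ √(B/A) r`.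
Since `cot` is decreasing on `(0, π)` this bounds `u`, and `θ < π` forces `√(B/A) r < π`
throughout `(0, R)`.
-/

open Real Set Filter Topology

namespace Real

theorem cot_antitoneOn : AntitoneOn cot (Ioo 0 π) := by
  intro x ⟨hx, _⟩ y ⟨_, hy⟩ hxy
  have hsx : 0 < sin x := sin_pos_of_pos_of_lt_pi hx (hxy.trans_lt hy)
  have hsy : 0 < sin y := sin_pos_of_pos_of_lt_pi (hx.trans_le hxy) hy
  have hsub : 0 ≤ sin (y - x) := sin_nonneg_of_nonneg_of_le_pi (sub_nonneg.2 hxy) (by linarith)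
  rw [sin_sub] at hsub
  rw [cot_eq_cos_div_sin, cot_eq_cos_div_sin, div_le_div_iff₀ hsy hsx]
  linarith

noncomputable def arccot (x : ℝ) : ℝ := π / 2 - arctan x

theorem arccot_mem_Ioo (x : ℝ) : arccot x ∈ Ioo 0 π := by
  have := neg_pi_div_two_lt_arctan x
  have := arctan_lt_pi_div_two x
  constructor <;> unfold arccot <;> linarith

theorem cot_arccot (x : ℝ) : cot (arccot x) = x := by
  rw [arccot, cot_eq_cos_div_sin, cos_pi_div_two_sub, sin_pi_div_two_sub, ← tan_eq_sin_div_cos,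
    tan_arctan]

end Real

theorem HasDerivAt.arccot {f : ℝ → ℝ} {f' x : ℝ} (hf : HasDerivAt f f' x) :
    HasDerivAt (fun y => arccot (f y)) (-(1 / (1 + f x ^ 2) * f')) x :=
  hf.arctan.const_sub (π / 2)

theorem mul_le_of_le_deriv_of_nonneg {θ : ℝ → ℝ} {k R r : ℝ}
    (hθ : DifferentiableOn ℝ θ (Ioo 0 R)) (hθ' : ∀ x ∈ Ioo 0 R, k ≤ deriv θ x)
    (hθ₀ : ∀ x ∈ Ioo 0 R, 0 ≤ θ x) (hr : r ∈ Ioo 0 R) : k * r ≤ θ r := by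
  have hincr : ∀ ε ∈ Ioo 0 r, k * (r - ε) ≤ θ r := fun ε hε => by
    have hεR : ε ∈ Ioo 0 R := ⟨hε.1, hε.2.trans hr.2⟩
    have := (convex_Ioo 0 R).mul_sub_le_image_sub_of_le_deriv hθ.continuousOn
      (by rwa [interior_Ioo]) (by rwa [interior_Ioo]) ε hεR r hr hε.2.le
    linarith [hθ₀ ε hεR]
  have hlim : Tendsto (fun ε => k * (r - ε)) (𝓝[>] 0) (𝓝 (k * (r - 0))) :=
    ((continuous_const.mul (continuous_const.sub continuous_id)).tendsto 0).mono_left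
      nhdsWithin_le_nhds
  rw [sub_zero] at hlim
  exact le_of_tendsto hlim (eventually_of_mem (Ioo_mem_nhdsGT hr.1) hincr)

theorem sqrt_div_eq_sqrt_mul_div {A B : ℝ} (hA : 0 < A) : √(B / A) = √(A * B) / A := by
  rw [eq_div_iff hA.ne', ← sqrt_sq hA.le, ← sqrt_mul' _ (sq_nonneg A), sqrt_sq hA.le]
  congr 1
  field_simp

theorem le_deriv_arccot_of_riccati {A B r : ℝ} (hA : 0 < A) (hB : 0 < B) {u : ℝ → ℝ}
    (hu : DifferentiableAt ℝ u r) (hode : deriv u r ≤ -(u r ^ 2) / A - B) :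
    √(B / A) ≤ deriv (fun x => arccot (u x / √(A * B))) r := by
  set s := √(A * B)
  have hs : 0 < s := sqrt_pos.2 (mul_pos hA hB)
  have hs2 : s ^ 2 = A * B := sq_sqrt (mul_pos hA hB).le
  rw [(hu.hasDerivAt.div_const s).arccot.deriv, sqrt_div_eq_sqrt_mul_div hA]
  have hden : 0 < s ^ 2 + u r ^ 2 := by positivity
  have hform : -(1 / (1 + (u r / s) ^ 2) * (deriv u r / s)) =
      -deriv u r * s / (s ^ 2 + u r ^ 2) := by
    field_simp
  rw [hform, div_le_div_iff₀ hA hden]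
  have hriccati : u r ^ 2 + s ^ 2 ≤ -deriv u r * A := by
    rw [hs2]
    have := mul_le_mul_of_nonneg_right hode hA.le
    field_simp at this
    linarith
  nlinarith

theorem stmt_11_general (A B R : ℝ) (hA : 0 < A) (hB : 0 < B)
    (u : ℝ → ℝ) (hu : DifferentiableOn ℝ u (Ioo 0 R))
    (hode : ∀ r ∈ Ioo 0 R, deriv u r ≤ -(u r ^ 2) / A - B) :
    (∀ r, 0 < r → r < min R (π * Real.sqrt (A / B)) →
        u r ≤ Real.sqrt (A * B) * Real.cot (Real.sqrt (B / A) * r)) ∧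
      R ≤ π * Real.sqrt (A / B) := by
  set s := √(A * B)
  set k := √(B / A)
  set θ := fun x => arccot (u x / s)
  have hk : 0 < k := sqrt_pos.2 (div_pos hB hA)
  have hπk : π * √(A / B) = π / k := by rw [← inv_div, sqrt_inv, ← div_eq_mul_inv]
  have hdiff : ∀ x ∈ Ioo 0 R, DifferentiableAt ℝ u x := fun x hx =>
    hu.differentiableAt (isOpen_Ioo.mem_nhds hx)
  have hphase : ∀ r ∈ Ioo 0 R, k * r ≤ θ r :=
    fun r => mul_le_of_le_deriv_of_nonneg
      (fun x hx =>
        ((hdiff x hx).hasDerivAt.div_const s).arccot.differentiableAt.differentiableWithinAt)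
      (fun x hx => le_deriv_arccot_of_riccati hA hB (hdiff x hx) (hode x hx))
      (fun x _ => (arccot_mem_Ioo _).1.le)
  rw [hπk]
  refine ⟨fun r hr hrR => ?_, le_of_not_gt fun hR => ?_⟩
  · rw [lt_min_iff, lt_div_iff₀' hk] at hrR
    have hu_eq : u r = s * cot (θ r) := by
      rw [cot_arccot, mul_div_cancel₀ _ (sqrt_pos.2 (mul_pos hA hB)).ne']
    rw [hu_eq]
    exact mul_le_mul_of_nonneg_left (cot_antitoneOn ⟨mul_pos hk hr, hrR.2⟩ (arccot_mem_Ioo _)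
      (hphase r ⟨hr, hrR.1⟩)) (sqrt_nonneg _)
  · obtain ⟨r, hπr, hrR⟩ := exists_between hR
    have := hphase r ⟨(div_pos pi_pos hk).trans hπr, hrR⟩
    have := (arccot_mem_Ioo (u r / s)).2
    rw [div_lt_iff₀' hk] at hπr
    linarith

/-- Riccati comparison lemma abstracting the Sturm–Liouville argument: if `A, B > 0`,
`u' ≤ -u²/A - B` on `(0,R)` and `limsup_{r→0+} r·u(r) ≤ A`, then
`u(r) ≤ √(AB)·cot(√(B/A)·r)` for `0 < r < min R (π√(A/B))`, and `R ≤ π√(A/B)`. -/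
theorem stmt_11 (A B R : ℝ) (hA : 0 < A) (hB : 0 < B) (hR : 0 < R)
    (u : ℝ → ℝ) (hu : DifferentiableOn ℝ u (Ioo 0 R))
    (hode : ∀ r ∈ Ioo 0 R, deriv u r ≤ -(u r ^ 2) / A - B)
    (hlim : Filter.limsup (fun r => r * u r) (nhdsWithin 0 (Ioi 0)) ≤ A) :
    (∀ r, 0 < r → r < min R (π * Real.sqrt (A / B)) →
        u r ≤ Real.sqrt (A * B) * Real.cot (Real.sqrt (B / A) * r)) ∧
      R ≤ π * Real.sqrt (A / B) :=
  stmt_11_general A B R hA hB u hu hode
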